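/- For all integers i, j with 3 ≤ i < j, let t_i and t_j denote the top-left bottleneck points of u_i and u_j respectively. For every grid path p_0, p_1, …, p_n in the U fractal 𝐔 such that p_0 = t_j, each of p_1, …, p_n lies in the left-middle of u_j, and the first coordinate of p_n is at least 3^{j-1} + 2·3^{j-3} (i.e. the path reaches a point east of the level-(j−3) substage containing t_j), there exists an index l ≤ n such that p_l + t_i − t_j ∉ 𝐔. -/
import Mathlib


/-- A point of the integer lattice `ℤ²`. -/
abbrev Pt := ℤ × ℤ

/-- Two points are grid-adjacent when their `ℓ¹` distance is `1`. -/
def adjPt (p q : Pt) : Prop := |p.1 - q.1| + |p.2 - q.2| = 1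

/-- The generator of the U fractal. -/
def GU : Set Pt := {(0,0),(0,1),(0,2),(1,0),(2,0),(2,1),(2,2)}

/-- `scaleAddU k A B = A + k·B` (componentwise). -/
def scaleAddU (k : ℤ) (A B : Set Pt) : Set Pt :=
  {q | ∃ p ∈ A, ∃ g ∈ B, q = (p.1 + k * g.1, p.2 + k * g.2)}

/-- The stages of the U fractal: `ustage 1 = GU` and
`ustage (i+1) = ustage i + 3^i · GU` for `i ≥ 1`. -/
def ustage : ℕ → Set Pt
  | 0 => ∅
  | 1 => GU
  | n + 2 => scaleAddU (3 ^ (n + 1)) (ustage (n + 1)) GU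

/-- The U fractal `𝐔 = ⋃_{i ≥ 1} u_i`. -/
def UFractal : Set Pt := {p | ∃ i : ℕ, 1 ≤ i ∧ p ∈ ustage i}

/-- The top-left bottleneck point of stage `u_j` of the U fractal (for `j ≥ 2`). -/
def tU (j : ℕ) : Pt :=
  (3 ^ (j - 1) + ((3 : ℤ) ^ (j - 2) - 1) / 2, 2 * 3 ^ (j - 2))

/-- The left-middle of stage `u_i`. -/
def leftMidU (i : ℕ) : Set Pt :=
  {p ∈ ustage i |
    3 ^ (i - 1) + ((3 : ℤ) ^ (i - 2) - 1) / 2 < p.1 ∧ p.1 < ((3 : ℤ) ^ i - 1) / 2}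

/- ### Auxiliary lemmas -/

lemma tp_pos (t : ℕ) : (0:ℤ) < 3 ^ t := pow_pos (by norm_num) t

lemma one_le_pow3 (s : ℕ) : (1:ℤ) ≤ 3 ^ s := by
  induction s with
  | zero => norm_num
  | succ k ih => rw [pow_succ]; nlinarith

lemma three_le_pow3 (s : ℕ) : (3:ℤ) ≤ 3 ^ (s + 1) := by
  have := one_le_pow3 s; rw [pow_succ]; nlinarith

lemma pow3_mono (s r : ℕ) : (3:ℤ) ^ s ≤ 3 ^ (s + r) := by
  induction r with
  | zero => simp
  | succ k ih =>
      have h1 := one_le_pow3 (s + k)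
      calc (3:ℤ)^s ≤ 3^(s+k) := ih
        _ ≤ 3^(s+k) * 3 := by nlinarith
        _ = 3^(s+k+1) := (pow_succ 3 (s+k)).symm

lemma ediv_eq_of_interval {P z : ℤ} (c : ℤ) (hP : 0 < P) (h1 : c * P ≤ z)
    (h2 : z < (c + 1) * P) : z / P = c := by
  have hz : z = (z - c * P) + P * c := by ring
  rw [hz, Int.add_mul_ediv_left _ c (ne_of_gt hP),
    Int.ediv_eq_zero_of_lt (by linarith) (by linarith), zero_add]

lemma lt_of_digit_zero {P y : ℤ} (hP : 0 < P) (h0 : 0 ≤ y) (h3 : y < 3 * P)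
    (hd : (y / P) % 3 = 0) : y < P := by
  by_contra hge
  push_neg at hge
  rcases lt_or_ge y (2 * P) with h | h
  · have : y / P = 1 := ediv_eq_of_interval 1 hP (by linarith) (by linarith)
    rw [this] at hd; norm_num at hd
  · have : y / P = 2 := ediv_eq_of_interval 2 hP (by linarith) (by linarith)
    rw [this] at hd; norm_num at hd

lemma digit_add_high {M t : ℕ} {z g : ℤ} (hz0 : 0 ≤ z) (hzM : z < 3 ^ M)
    (hg0 : 0 ≤ g) (hg2 : g < 3) :
    ((z + 3 ^ M * g) / 3 ^ t) % 3 =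
      if t < M then (z / 3 ^ t) % 3 else if t = M then g else 0 := by
  rcases Nat.lt_trichotomy t M with h | h | h
  · rw [if_pos h]
    obtain ⟨r, hr⟩ : ∃ r, M = t + r + 1 := ⟨M - t - 1, by omega⟩
    have hfac : (3:ℤ) ^ M * g = 3 ^ t * (3 * (3 ^ r * g)) := by
      rw [hr]; ring
    rw [hfac, Int.add_mul_ediv_left z _ (ne_of_gt (tp_pos t)),
      Int.add_mul_emod_self_left]
  · subst h
    rw [if_neg (lt_irrefl t), if_pos rfl,
      Int.add_mul_ediv_left z g (ne_of_gt (tp_pos t)),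
      Int.ediv_eq_zero_of_lt hz0 hzM, zero_add, Int.emod_eq_of_lt hg0 hg2]
  · rw [if_neg (by omega), if_neg (by omega)]
    have hg2' : (3:ℤ)^M * g ≤ 3^M * 2 := by
      have := (tp_pos M).le
      exact mul_le_mul_of_nonneg_left (by omega) this
    have hlt : z + 3 ^ M * g < 3 ^ t := by
      have h1 : z + 3 ^ M * g < 3 * 3 ^ M := by linarith
      have h2 : (3:ℤ) * 3 ^ M = 3 ^ (M + 1) := by rw [pow_succ]; ring
      have h3 : (3:ℤ) ^ (M + 1) ≤ 3 ^ t := by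
        have := pow3_mono (M + 1) (t - (M + 1))
        rwa [show M + 1 + (t - (M+1)) = t from by omega] at this
      linarith
    rw [Int.ediv_eq_zero_of_lt (by positivity) hlt]
    norm_num

lemma GU_facts {g : Pt} (hg : g ∈ GU) :
    0 ≤ g.1 ∧ g.1 < 3 ∧ 0 ≤ g.2 ∧ g.2 < 3 ∧ (g.1 = 1 → g.2 = 0) := by
  simp only [GU, Set.mem_insert_iff, Set.mem_singleton_iff] at hg
  rcases hg with h|h|h|h|h|h|h <;> subst h <;> norm_num

lemma base_digits {x y : ℤ} (hx0 : 0 ≤ x) (hx2 : x < 3) (hy0 : 0 ≤ y) (hy2 : y < 3)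
    (hxy : x = 1 → y = 0) : ∀ t : ℕ, (x / 3 ^ t) % 3 = 1 → (y / 3 ^ t) % 3 = 0 := by
  intro t
  match t with
  | 0 =>
    simp only [pow_zero, Int.ediv_one]
    intro h
    have hx : x = 1 := by
      rw [Int.emod_eq_of_lt hx0 hx2] at h; exact h
    rw [hxy hx]; norm_num
  | (s+1) =>
    intro h
    exfalso
    have h3 : (3:ℤ) ≤ 3 ^ (s+1) := three_le_pow3 s
    have : x / 3 ^ (s+1) = 0 := Int.ediv_eq_zero_of_lt hx0 (by linarith)
    rw [this] at h; norm_num at h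

lemma ustage_digits : ∀ (m : ℕ) (q : Pt), q ∈ ustage m →
    0 ≤ q.1 ∧ q.1 < 3 ^ m ∧ 0 ≤ q.2 ∧ q.2 < 3 ^ m ∧
    ∀ t : ℕ, (q.1 / 3 ^ t) % 3 = 1 → (q.2 / 3 ^ t) % 3 = 0 := by
  intro m
  induction m with
  | zero => intro q hq; simp [ustage] at hq
  | succ m ih =>
    cases m with
    | zero =>
      intro q hq
      have hq' : q ∈ GU := hq
      obtain ⟨h1, h2, h3, h4, h5⟩ := GU_facts hq'
      exact ⟨h1, by simpa using h2, h3, by simpa using h4, base_digits h1 h2 h3 h4 h5⟩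
    | succ m' =>
      intro q hq
      have hq' : q ∈ scaleAddU (3 ^ (m' + 1)) (ustage (m' + 1)) GU := hq
      obtain ⟨r, hr, g, hg, hqe⟩ := hq'
      obtain ⟨hr1, hr2, hr3, hr4, hr5⟩ := ih r hr
      obtain ⟨hg1, hg2, hg3, hg4, hg5⟩ := GU_facts hg
      subst hqe
      have hpos := tp_pos (m' + 1)
      have hE2 : (3:ℤ) ^ (m' + 1 + 1) = 3 * 3 ^ (m' + 1) := by ring
      have hb1 : (3:ℤ) ^ (m'+1) * g.1 ≤ 3 ^ (m'+1) * 2 :=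
        mul_le_mul_of_nonneg_left (by omega) hpos.le
      have hb2 : (3:ℤ) ^ (m'+1) * g.2 ≤ 3 ^ (m'+1) * 2 :=
        mul_le_mul_of_nonneg_left (by omega) hpos.le
      refine ⟨?_, ?_, ?_, ?_, ?_⟩
      · exact add_nonneg hr1 (mul_nonneg hpos.le hg1)
      · dsimp only; linarith
      · exact add_nonneg hr3 (mul_nonneg hpos.le hg3)
      · dsimp only; linarith
      · intro t ht
        dsimp only at ht ⊢
        rw [digit_add_high hr1 hr2 hg1 hg2] at ht
        rw [digit_add_high hr3 hr4 hg3 hg4]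
        rcases Nat.lt_trichotomy t (m' + 1) with h | h | h
        · rw [if_pos h] at ht ⊢; exact hr5 t ht
        · rw [if_neg (by omega), if_pos h] at ht
          rw [if_neg (by omega), if_pos h]
          exact hg5 ht
        · rw [if_neg (by omega), if_neg (by omega)] at ht
          norm_num at ht

lemma ufractal_digits {P : Pt} (h : P ∈ UFractal) :
    0 ≤ P.1 ∧ 0 ≤ P.2 ∧ ∀ t : ℕ, (P.1 / 3 ^ t) % 3 = 1 → (P.2 / 3 ^ t) % 3 = 0 := by
  obtain ⟨m, _, hm⟩ := h
  obtain ⟨h1, _, h3, _, h5⟩ := ustage_digits m P hm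
  exact ⟨h1, h3, h5⟩

lemma first_reach (f : ℕ → ℤ) (n : ℕ) (c : ℤ)
    (hstep : ∀ k, k < n → f (k + 1) ≤ f k + 1)
    (hs : f 0 < c) (hn : c ≤ f n) :
    ∃ m, 0 < m ∧ m ≤ n ∧ f m = c ∧ ∀ k, k < m → f k < c := by
  classical
  have hP : ∃ k, k ≤ n ∧ c ≤ f k := ⟨n, le_refl n, hn⟩
  set m := Nat.find hP with hmdef
  have hm : m ≤ n ∧ c ≤ f m := by rw [hmdef]; exact Nat.find_spec hP
  have hlt : ∀ k, k < m → f k < c := by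
    intro k hk
    by_contra hge
    push_neg at hge
    exact Nat.find_min hP hk ⟨by omega, hge⟩
  have hm0 : 0 < m := by
    rcases Nat.eq_zero_or_pos m with h | h
    · exfalso; have h2 := hm.2; rw [h] at h2; linarith
    · exact h
  have hm1 : m - 1 + 1 = m := by omega
  have hfm : f m = c := by
    have h1 : f (m - 1) < c := hlt (m - 1) (by omega)
    have h2 : f (m - 1 + 1) ≤ f (m - 1) + 1 := hstep (m - 1) (by omega)
    rw [hm1] at h2
    have := hm.2
    omega
  exact ⟨m, hm0, hm.1, hfm, hlt⟩

set_option maxHeartbeats 1600000 in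
/-- For `3 ≤ i < j`, every grid path in `𝐔` that starts at the
top-left bottleneck point `t_j` of `u_j`, stays in the left-middle of `u_j`, and
reaches a point with first coordinate at least `3^{j-1} + 2·3^{j-3}` (i.e. east of
the level-`(j−3)` substage containing `t_j`), has a point whose translate by
`t_i − t_j` lies outside `𝐔`. -/
theorem uFractal_top_left_growth_out_of_bounds :
    ∀ i j : ℕ, 3 ≤ i → i < j →
      ∀ (n : ℕ) (p : ℕ → Pt),
        (∀ k ≤ n, p k ∈ UFractal) →
        (∀ k < n, adjPt (p k) (p (k + 1))) →
        p 0 = tU j →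
        (∀ k, 1 ≤ k → k ≤ n → p k ∈ leftMidU j) →
        (3 : ℤ) ^ (j - 1) + 2 * 3 ^ (j - 3) ≤ (p n).1 →
        ∃ l ≤ n, p l + tU i - tU j ∉ UFractal := by
  intro i j hi hij n p hU hadj h0 hmid hend
  by_contra hcon
  push_neg at hcon
  obtain ⟨ii, rfl⟩ : ∃ ii, i = ii + 3 := ⟨i - 3, by omega⟩
  obtain ⟨jj, rfl⟩ : ∃ jj, j = ii + jj + 4 := ⟨j - ii - 4, by omega⟩
  clear hi hij
  have e1 : ii + 3 - 1 = ii + 2 := by omega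
  have e2 : ii + 3 - 2 = ii + 1 := by omega
  have e3 : ii + jj + 4 - 1 = ii + jj + 3 := by omega
  have e4 : ii + jj + 4 - 2 = ii + jj + 2 := by omega
  have e5 : ii + jj + 4 - 3 = ii + jj + 1 := by omega
  obtain ⟨u, hu⟩ : Odd ((3:ℤ) ^ (ii + 1)) := Odd.pow ⟨1, by norm_num⟩
  obtain ⟨v, hv⟩ : Odd ((3:ℤ) ^ (ii + jj + 2)) := Odd.pow ⟨1, by norm_num⟩
  have pA : (3:ℤ) ^ (ii + 2) = 3 * 3 ^ (ii + 1) := by ring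
  have pb : (3:ℤ) ^ (ii + jj + 2) = 3 * 3 ^ (ii + jj + 1) := by ring
  have pB : (3:ℤ) ^ (ii + jj + 3) = 9 * 3 ^ (ii + jj + 1) := by ring
  obtain ⟨a, haDef⟩ : ∃ x : ℤ, x = (3:ℤ) ^ (ii + 1) := ⟨_, rfl⟩
  obtain ⟨C, hCDef⟩ : ∃ x : ℤ, x = (3:ℤ) ^ (ii + jj + 1) := ⟨_, rfl⟩
  rw [← haDef] at pA
  rw [← hCDef] at pb pB
  have hv2 : 3 * C = 2 * v + 1 := by rw [← pb]; omega
  have hu2 : a = 2 * u + 1 := by rw [haDef]; omega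
  have ha3 : 3 ≤ a := by rw [haDef]; exact three_le_pow3 ii
  have hC3 : 3 ≤ C := by rw [hCDef]; exact three_le_pow3 (ii + jj)
  have haC : a ≤ C := by
    rw [haDef, hCDef]
    have h := pow3_mono (ii + 1) jj
    rwa [show ii + 1 + jj = ii + jj + 1 from by omega] at h
  have hu1 : 1 ≤ u := by omega
  have hv1 : C ≤ v := by omega
  have hvv : ((3:ℤ) ^ (ii + jj + 2) - 1) / 2 = v := by rw [pb]; omega
  have hti1 : (tU (ii + 3)).1 = 3 * a + u := by
    show (3:ℤ) ^ (ii + 3 - 1) + ((3:ℤ) ^ (ii + 3 - 2) - 1) / 2 = 3 * a + u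
    rw [e1, e2, pA, ← haDef]
    omega
  have hti2 : (tU (ii + 3)).2 = 2 * a := by
    show 2 * (3:ℤ) ^ (ii + 3 - 2) = 2 * a
    rw [e2, ← haDef]
  have htj1 : (tU (ii + jj + 4)).1 = 9 * C + v := by
    show (3:ℤ) ^ (ii + jj + 4 - 1) + ((3:ℤ) ^ (ii + jj + 4 - 2) - 1) / 2 = 9 * C + v
    rw [e3, e4, pB, hvv]
  have htj2 : (tU (ii + jj + 4)).2 = 6 * C := by
    show 2 * (3:ℤ) ^ (ii + jj + 4 - 2) = 6 * C
    rw [e4, pb]; ring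
  have hx0 : (p 0).1 = 9 * C + v := by rw [h0]; exact htj1
  have hy0 : (p 0).2 = 6 * C := by rw [h0]; exact htj2
  have hmid' : ∀ k, 1 ≤ k → k ≤ n → 9 * C + v < (p k).1 := by
    intro k h1 h2
    have hm := hmid k h1 h2
    simp only [leftMidU, Set.mem_setOf_eq] at hm
    have h3 := hm.2.1
    rwa [e3, e4, pB, hvv] at h3
  have hend' : 11 * C ≤ (p n).1 := by
    rw [e3, e5, pB, ← hCDef] at hend
    linarith
  have hTk : ∀ k, k ≤ n →
      0 ≤ (p k).2 + 2 * a - 6 * C ∧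
      ∀ t : ℕ, (((p k).1 + (3 * a + u) - (9 * C + v)) / 3 ^ t) % 3 = 1 →
        (((p k).2 + 2 * a - 6 * C) / 3 ^ t) % 3 = 0 := by
    intro k hk
    have h := ufractal_digits (hcon k hk)
    have c1 : (p k + tU (ii + 3) - tU (ii + jj + 4)).1
        = (p k).1 + (3 * a + u) - (9 * C + v) := by
      simp only [Prod.fst_add, Prod.fst_sub, hti1, htj1]
    have c2 : (p k + tU (ii + 3) - tU (ii + jj + 4)).2
        = (p k).2 + 2 * a - 6 * C := by
      simp only [Prod.snd_add, Prod.snd_sub, hti2, htj2]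
    rw [c1, c2] at h
    exact ⟨h.2.1, h.2.2⟩
  have hOk : ∀ k, k ≤ n → ∀ t : ℕ,
      ((p k).1 / 3 ^ t) % 3 = 1 → ((p k).2 / 3 ^ t) % 3 = 0 :=
    fun k hk => (ufractal_digits (hU k hk)).2.2
  have hS3 : ∀ k, k ≤ n → 6 * C - 2 * a ≤ (p k).2 := by
    intro k hk; have := (hTk k hk).1; linarith
  have hS5 : ∀ k, 1 ≤ k → k ≤ n → (p k).2 < 6 * C → 11 * C ≤ (p k).1 := by
    intro k h1 h2 hy
    by_contra hx
    push_neg at hx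
    have hxlo : 10 * C < (p k).1 := by have := hmid' k h1 h2; omega
    have hdx : ((p k).1 / 3 ^ (ii + jj + 1)) % 3 = 1 := by
      have hq : (p k).1 / C = 10 :=
        ediv_eq_of_interval (P := C) (z := (p k).1) 10 (by linarith)
          (by linarith) (by linarith)
      rw [← hCDef, hq]
      norm_num
    have hdy := hOk k h2 _ hdx
    rw [← hCDef] at hdy
    have hylo : 4 * C ≤ (p k).2 := by have := hS3 k h2; linarith
    rcases lt_or_ge ((p k).2) (5 * C) with h5 | h5
    · have hq : (p k).2 / C = 4 :=
        ediv_eq_of_interval (P := C) (z := (p k).2) 4 (by linarith)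
          (by linarith) (by linarith)
      rw [hq] at hdy
      norm_num at hdy
    · have hq : (p k).2 / C = 5 :=
        ediv_eq_of_interval (P := C) (z := (p k).2) 5 (by linarith)
          (by linarith) (by linarith)
      rw [hq] at hdy
      norm_num at hdy
  have hstepx : ∀ k, k < n →
      ((p (k+1)).1 ≤ (p k).1 + 1 ∧ (p k).1 ≤ (p (k+1)).1 + 1) ∧
      ((p (k+1)).2 ≤ (p k).2 + 1 ∧ (p k).2 ≤ (p (k+1)).2 + 1) ∧
      ((p k).1 ≠ (p (k+1)).1 → (p k).2 = (p (k+1)).2) := by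
    intro k hk
    have h := hadj k hk
    unfold adjPt at h
    rcases abs_cases ((p k).1 - (p (k+1)).1) with ⟨h1, h1'⟩ | ⟨h1, h1'⟩ <;>
      rcases abs_cases ((p k).2 - (p (k+1)).2) with ⟨h2, h2'⟩ | ⟨h2, h2'⟩ <;>
      rw [h1, h2] at h <;>
      exact ⟨⟨by omega, by omega⟩, ⟨by omega, by omega⟩, by omega⟩
  obtain ⟨k0, hk0pos, hk0n, hk0x, hk0min⟩ :=
    first_reach (fun k => (p k).1) n (9 * C + v + (u + 1))
      (fun k hk => (hstepx k hk).1.1)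
      (by show (p 0).1 < 9 * C + v + (u + 1); rw [hx0]; omega)
      (by show 9 * C + v + (u + 1) ≤ (p n).1; omega)
  have hk0x' : (p k0).1 = 9 * C + v + (u + 1) := hk0x
  have hk0n' : k0 - 1 < n := by omega
  have hstep0 := hstepx (k0 - 1) hk0n'
  have hk1e : k0 - 1 + 1 = k0 := by omega
  rw [hk1e] at hstep0
  have hxk1lt : (p (k0 - 1)).1 < 9 * C + v + (u + 1) := hk0min (k0 - 1) (by omega)
  have hxk1 : (p (k0 - 1)).1 = 9 * C + v + u := by
    have h1 := hstep0.1.1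
    omega
  have hyeq : (p (k0 - 1)).2 = (p k0).2 := by
    apply hstep0.2.2
    omega
  have hk11 : 1 ≤ k0 - 1 := by
    by_contra h
    push_neg at h
    have hz : k0 - 1 = 0 := by omega
    rw [hz, hx0] at hxk1
    omega
  have hy1 : 6 * C ≤ (p (k0 - 1)).2 := by
    by_contra h
    push_neg at h
    have h11 := hS5 (k0 - 1) hk11 (by omega) h
    rw [hxk1] at h11
    omega
  have hyk0 : 6 * C ≤ (p k0).2 := by rw [← hyeq]; exact hy1
  have hdigk0 := (hTk k0 hk0n).2
  have hXk0 : (p k0).1 + (3 * a + u) - (9 * C + v) = 4 * a := by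
    rw [hk0x']; omega
  have hY0 : 0 ≤ (p k0).2 + 2 * a - 6 * C := (hTk k0 hk0n).1
  have hd1 : (((p k0).1 + (3 * a + u) - (9 * C + v)) / 3 ^ (ii + 2)) % 3 = 1 := by
    have hq : 4 * a / (3 * a) = 1 :=
      ediv_eq_of_interval (P := 3 * a) (z := 4 * a) 1 (by linarith)
        (by linarith) (by linarith)
    rw [hXk0, pA, hq]
    norm_num
  have hd2 : (((p k0).1 + (3 * a + u) - (9 * C + v)) / 3 ^ (ii + 1)) % 3 = 1 := by
    have hq : 4 * a / a = 4 :=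
      ediv_eq_of_interval (P := a) (z := 4 * a) 4 (by linarith)
        (by linarith) (by linarith)
    rw [hXk0, ← haDef, hq]
    norm_num
  have hdy1 := hdigk0 _ hd1
  have hdy2 := hdigk0 _ hd2
  have hYbig : 9 * a ≤ (p k0).2 + 2 * a - 6 * C := by
    by_contra hsm
    push_neg at hsm
    rw [pA] at hdy1
    have hlt1 : (p k0).2 + 2 * a - 6 * C < 3 * a :=
      lt_of_digit_zero (by linarith) hY0 (by linarith) hdy1
    rw [← haDef] at hdy2
    have hlt2 : (p k0).2 + 2 * a - 6 * C < a :=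
      lt_of_digit_zero (by linarith) hY0 (by linarith) hdy2
    linarith
  obtain ⟨m, hmpos, hmk0, hmy, hmmin⟩ :=
    first_reach (fun k => (p k).2) k0 (6 * C + a)
      (fun k hk => (hstepx k (lt_of_lt_of_le hk hk0n)).2.1.1)
      (by show (p 0).2 < 6 * C + a; rw [hy0]; omega)
      (by show 6 * C + a ≤ (p k0).2; omega)
  have hmy' : (p m).2 = 6 * C + a := hmy
  have hmltk0 : m < k0 := by
    rcases lt_or_eq_of_le hmk0 with h | h
    · exact h
    · exfalso; rw [h] at hmy'; omega
  have hmn : m ≤ n := by omega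
  have hxm_up : (p m).1 < 9 * C + v + (u + 1) := hk0min m hmltk0
  have hxm_lo : 9 * C + v < (p m).1 := hmid' m (by omega) hmn
  have hdm : (((p m).1 + (3 * a + u) - (9 * C + v)) / 3 ^ (ii + 2)) % 3 = 1 := by
    have hq : ((p m).1 + (3 * a + u) - (9 * C + v)) / (3 * a) = 1 :=
      ediv_eq_of_interval (P := 3 * a) (z := (p m).1 + (3 * a + u) - (9 * C + v)) 1
        (by omega) (by omega) (by omega)
    rw [pA, hq]
    norm_num
  have hdym := (hTk m hmn).2 _ hdm
  rw [pA] at hdym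
  have hYm : (p m).2 + 2 * a - 6 * C = 3 * a := by rw [hmy']; ring
  have hq : 3 * a / (3 * a) = 1 :=
    ediv_eq_of_interval (P := 3 * a) (z := 3 * a) 1 (by linarith)
      (by linarith) (by linarith)
  rw [hYm, hq] at hdym
  norm_num at hdym
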